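/- arXiv:2112.13992 — 6 statements merged into one kernel-verified Lean document; each statement's English description precedes it below -/
import Mathlib

section
/- Let X be a topological space and x ∈ X a point that is both a non-closed proper point and maximal with respect to the specialization preorder. Then the derived set closure({x}) \ {x} is a closed subset contained in the set of quasi-recurrent points; in particular every point in closure({x}) \ {x} is non-maximal with respect to the specialization preorder. -/
theorem stmt_5 {X : Type*} [TopologicalSpace X] (x : X)
    (hnc : ¬ IsClosed ({x} : Set X))
    (hTD : IsClosed (closure ({x} : Set X) \ {x}))
    (hmax : ¬ ∃ z : X, closure ({x} : Set X) ⊂ closure {z}) :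
    IsClosed (closure ({x} : Set X) \ {x}) ∧
      ∀ y ∈ closure ({x} : Set X) \ {x},
        ∃ z : X, closure ({y} : Set X) ⊂ closure {z} := by
  refine ⟨hTD, fun y hy => ⟨x, ?_⟩⟩
  obtain ⟨hyc, hyne⟩ := hy
  have hsub : closure ({y} : Set X) ⊆ closure ({x} : Set X) :=
    closure_minimal (Set.singleton_subset_iff.mpr hyc) isClosed_closure
  refine ⟨hsub, fun hsub' => ?_⟩
  have hx : x ∈ closure ({y} : Set X) := hsub' (subset_closure rfl)
  have h2 : closure ({y} : Set X) ⊆ closure ({x} : Set X) \ {x} :=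
    closure_minimal (Set.singleton_subset_iff.mpr ⟨hyc, hyne⟩) hTD
  exact (h2 hx).2 rfl
end

section
/- Let v be a flow on a Hausdorff space X and x a point whose orbit O(x) is not closed and whose derived set closure(O(x)) \ O(x) is not closed. Then x ∈ α(x) ∪ ω(x), i.e., the orbit is recurrent. -/
/-!
On a compact time interval the orbit of `x` is compact, hence closed, so a point of
`closure O(x) \ O(x)` is approached as `t → -∞` or as `t → +∞`: it lies in `α(x) ∪ ω(x)`.
Conversely `α(x) ∪ ω(x) ⊆ closure O(x)`, and since the limit sets are invariant they can
meet `O(x)` only if they contain `x`. Hence, if `x` is not recurrent,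
`closure O(x) \ O(x) = α(x) ∪ ω(x)`, which is closed.

Here `α(x)` and `ω(x)` are Mathlib's `ω⁻ ϕ {x}` and `ω⁺ ϕ {x}`.
-/

open Set Filter Topology omegaLimit

theorem mapClusterPt_cocompact_of_mem_closure_range_diff {α X : Type*} [TopologicalSpace α]
    [TopologicalSpace X] [T2Space X] {f : α → X} (hf : Continuous f) {y : X}
    (hy : y ∈ closure (range f) \ range f) : MapClusterPt y (cocompact α) f := by
  rw [MapClusterPt, (hasBasis_cocompact.map f).clusterPt_iff_forall_mem_closure]
  intro K hK
  have hy' := hy.1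
  rw [← image_univ, ← union_compl_self K, image_union, closure_union,
    (hK.image hf).isClosed.closure_eq] at hy'
  exact hy'.resolve_left fun hyK => hy.2 (image_subset_range f K hyK)

section

variable {τ α β : Type*} [TopologicalSpace β] [Preorder τ] [Nonempty τ]

theorem omegaLimit_atTop_singleton_eq_iInter_closure [IsDirectedOrder τ] [NoMaxOrder τ]
    (ϕ : τ → α → β) (x : α) : ω⁺ ϕ {x} = ⋂ n, closure ((ϕ · x) '' Ioi n) := by
  ext y
  simp [mem_omegaLimit_singleton_iff_mapClusterPt, MapClusterPt,
    (atTop_basis_Ioi.map _).clusterPt_iff_forall_mem_closure]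

theorem omegaLimit_atBot_singleton_eq_iInter_closure [IsCodirectedOrder τ] [NoMinOrder τ]
    (ϕ : τ → α → β) (x : α) : ω⁻ ϕ {x} = ⋂ n, closure ((ϕ · x) '' Iio n) := by
  ext y
  simp [mem_omegaLimit_singleton_iff_mapClusterPt, MapClusterPt,
    (atBot_basis_Iio.map _).clusterPt_iff_forall_mem_closure]

end

namespace Flow

variable {τ X : Type*} [TopologicalSpace τ] [TopologicalSpace X]

theorem omegaLimit_singleton_subset_closure_orbit [AddMonoid τ] (ϕ : Flow τ X) (f : Filter τ)
    (x : X) : ω f ϕ {x} ⊆ closure (orbit ϕ x) := by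
  simpa [image2_singleton_right, orbit_eq_range] using
    omegaLimit_subset_closure_image2 f ϕ {x} univ_mem

theorem mem_omegaLimit_singleton_of_mem_orbit [AddGroup τ] (ϕ : Flow τ X)
    {f : Filter τ} (hf : ∀ t, Tendsto (t + ·) f f) {x y : X} (hy : y ∈ orbit ϕ x)
    (hyω : y ∈ ω f ϕ {x}) : x ∈ ω f ϕ {x} := by
  obtain ⟨t, rfl⟩ := ϕ.mem_orbit_iff.1 hy
  have := ϕ.isInvariant_omegaLimit f {x} hf (-t) hyω
  rwa [← map_add, neg_add_cancel, map_zero_apply] at this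

theorem closure_orbit_diff_orbit_subset [T2Space X] (ϕ : Flow ℝ X) (x : X) :
    closure (orbit ϕ x) \ orbit ϕ x ⊆ ω⁻ ϕ {x} ∪ ω⁺ ϕ {x} := by
  intro y hy
  have := mapClusterPt_cocompact_of_mem_closure_range_diff (f := (ϕ · x)) (by fun_prop) hy
  rw [cocompact_eq_atBot_atTop] at this
  simpa only [mem_union, mem_omegaLimit_singleton_iff_mapClusterPt, MapClusterPt, map_sup,
    clusterPt_sup] using this

theorem closure_orbit_diff_orbit_eq_of_not_recurrent [T2Space X] (ϕ : Flow ℝ X) {x : X}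
    (hx : x ∉ ω⁻ ϕ {x} ∪ ω⁺ ϕ {x}) :
    closure (orbit ϕ x) \ orbit ϕ x = ω⁻ ϕ {x} ∪ ω⁺ ϕ {x} := by
  refine (ϕ.closure_orbit_diff_orbit_subset x).antisymm fun y hy => ⟨?_, fun hyO => hx ?_⟩
  · rcases hy with hy | hy <;> exact ϕ.omegaLimit_singleton_subset_closure_orbit _ x hy
  · rcases hy with hy | hy
    · exact .inl <| ϕ.mem_omegaLimit_singleton_of_mem_orbit
        (fun t => tendsto_atBot_add_const_left _ t tendsto_id) hyO hy
    · exact .inr <| ϕ.mem_omegaLimit_singleton_of_mem_orbit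
        (fun t => tendsto_atTop_add_const_left _ t tendsto_id) hyO hy

end Flow

theorem stmt_9_general {X : Type*} [TopologicalSpace X] [T2Space X]
    (v : ℝ → X → X)
    (hc : Continuous fun p : ℝ × X => v p.1 p.2)
    (h0 : ∀ x : X, v 0 x = x)
    (hadd : ∀ s t : ℝ, ∀ x : X, v s (v t x) = v (s + t) x)
    (x : X)
    (hd : ¬ IsClosed (closure (Set.range fun t => v t x) \ Set.range fun t => v t x)) :
    x ∈ (⋂ n : ℝ, closure ((fun t => v t x) '' Set.Iio n)) ∪
        ⋂ n : ℝ, closure ((fun t => v t x) '' Set.Ioi n) := by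
  let ϕ : Flow ℝ X := ⟨v, hc, fun s t y => (hadd s t y).symm, h0⟩
  rw [← omegaLimit_atBot_singleton_eq_iInter_closure,
    ← omegaLimit_atTop_singleton_eq_iInter_closure]
  by_contra hx
  refine hd ?_
  change IsClosed (closure (Flow.orbit ϕ x) \ Flow.orbit ϕ x)
  rw [ϕ.closure_orbit_diff_orbit_eq_of_not_recurrent hx]
  exact (isClosed_omegaLimit _ _ _).union (isClosed_omegaLimit _ _ _)

theorem stmt_9 {X : Type*} [TopologicalSpace X] [T2Space X]
    (v : ℝ → X → X)
    (hc : Continuous fun p : ℝ × X => v p.1 p.2)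
    (h0 : ∀ x : X, v 0 x = x)
    (hadd : ∀ s t : ℝ, ∀ x : X, v s (v t x) = v (s + t) x)
    (x : X)
    (hnc : ¬ IsClosed (Set.range fun t => v t x))
    (hd : ¬ IsClosed (closure (Set.range fun t => v t x) \ Set.range fun t => v t x)) :
    x ∈ (⋂ n : ℝ, closure ((fun t => v t x) '' Set.Iio n)) ∪
        ⋂ n : ℝ, closure ((fun t => v t x) '' Set.Ioi n) :=
  stmt_9_general v hc h0 hadd x hd
end

section
/- Let v be a flow on a locally compact Hausdorff space X and let x be a point with x ∈ α(x) ∪ ω(x) whose orbit O(x) is not closed. Then the derived set closure(O(x)) \ O(x) is not closed. (Key step: if closure(O(x)) \ O(x) were closed, then O(x) would be an open subset of the Baire space closure(O(x)), hence Baire, and the open dense sets U_n = {v(t,x) : t ∉ [n, n+1]} would have dense intersection, a contradiction.) -/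
/-!
If the derived set `closure O \ O` of the orbit `O = range (fun t => ϕ t x)` were closed, the
Baire space `closure O` would be covered by the countably many closed sets
`ϕ [n, n+1] x ∪ (closure O \ O)`, so one of them contains a nonempty relatively open set, i.e.
an open `W` meeting `O` only at times in `[n, n+1]`. Recurrence brings the orbit back into `W`
at a time `t > n + 1`, so `ϕ t x = ϕ u x` with `u ≠ t`: the orbit is periodic, hence compact and
closed. The `α`-recurrent case reduces to the `ω`-recurrent one by reversing time.
-/

open Set Function

theorem exists_isOpen_inter_range_subset_image_Icc {X : Type*} [TopologicalSpace X] [T2Space X]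
    {f : ℝ → X} (hf : Continuous f) [BaireSpace (closure (range f))]
    (hD : IsClosed (closure (range f) \ range f)) :
    ∃ (n : ℤ) (W : Set X), IsOpen W ∧ (W ∩ range f).Nonempty ∧
      W ∩ range f ⊆ f '' Icc (n : ℝ) (n + 1) := by
  set C := closure (range f)
  have : Nonempty C := ⟨⟨f 0, subset_closure (mem_range_self 0)⟩⟩
  set F : ℤ → Set C := fun n => (↑) ⁻¹' (f '' Icc (n : ℝ) (n + 1) ∪ (C \ range f))
  have hF_closed : ∀ n, IsClosed (F n) := fun n =>
    (((isCompact_Icc.image hf).isClosed).union hD).preimage continuous_subtype_val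
  have hF_cover : ⋃ n, F n = univ := by
    refine eq_univ_of_forall fun ⟨y, hyC⟩ => mem_iUnion.2 ?_
    by_cases hy : y ∈ range f
    · obtain ⟨t, rfl⟩ := hy
      exact ⟨⌊t⌋, Or.inl ⟨t, ⟨Int.floor_le t, (Int.lt_floor_add_one t).le⟩, rfl⟩⟩
    · exact ⟨0, Or.inr ⟨hyC, hy⟩⟩
  obtain ⟨n, y, hy⟩ := nonempty_interior_of_iUnion_of_closed hF_closed hF_cover
  obtain ⟨W, hW, hWF⟩ := isOpen_induced_iff.1 (isOpen_interior (s := F n))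
  have hyW : (y : X) ∈ W := by rw [← mem_preimage, hWF]; exact hy
  refine ⟨n, W, hW, mem_closure_iff.1 y.2 W hW hyW, ?_⟩
  rintro _ ⟨hzW, t, rfl⟩
  have hz : (⟨f t, subset_closure (mem_range_self t)⟩ : C) ∈ F n :=
    interior_subset (by rw [← hWF]; exact hzW)
  exact hz.resolve_right fun h => h.2 (mem_range_self t)

namespace Flow

variable {X : Type*} [TopologicalSpace X] (ϕ : Flow ℝ X) (x : X)

theorem continuous_orbit_map : Continuous fun t => ϕ t x :=
  ϕ.continuous continuous_id continuous_const

theorem periodic_orbit_map_of_map_eq_map {t u : ℝ} (h : ϕ t x = ϕ u x) :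
    Periodic (fun s => ϕ s x) (t - u) := fun s => by
  calc ϕ (s + (t - u)) x = ϕ (s - u) (ϕ t x) := by rw [← map_add]; ring_nf
    _ = ϕ (s - u) (ϕ u x) := by rw [h]
    _ = ϕ s x := by rw [← map_add]; ring_nf

theorem isClosed_orbit_of_map_eq_map [T2Space X] {t u : ℝ} (htu : t ≠ u) (h : ϕ t x = ϕ u x) :
    IsClosed (orbit ϕ x) :=
  ((ϕ.periodic_orbit_map_of_map_eq_map x h).compact_of_continuous (sub_ne_zero.2 htu)
    (ϕ.continuous_orbit_map x)).isClosed

variable {ϕ x}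

theorem exists_gt_map_mem_of_mem_closure_image_Ioi
    (hx : x ∈ ⋂ n : ℝ, closure ((fun t => ϕ t x) '' Ioi n)) {W : Set X} (hW : IsOpen W)
    {s : ℝ} (hs : ϕ s x ∈ W) (M : ℝ) : ∃ t > M, ϕ t x ∈ W := by
  have hmaps : MapsTo (ϕ s) ((fun t => ϕ t x) '' Ioi (M - s)) ((fun t => ϕ t x) '' Ioi M) := by
    rintro _ ⟨t, ht, rfl⟩
    exact ⟨s + t, mem_Ioi.2 (by linarith [mem_Ioi.1 ht]), ϕ.map_add s t x⟩
  have hsM := map_mem_closure (ϕ.continuous_toFun s) (mem_iInter.1 hx (M - s)) hmaps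
  obtain ⟨_, htW, t, ht, rfl⟩ := mem_closure_iff.1 hsM W hW hs
  exact ⟨t, ht, htW⟩

theorem not_isClosed_closure_orbit_diff_orbit_of_forward [T2Space X] [LocallyCompactSpace X]
    (hx : x ∈ ⋂ n : ℝ, closure ((fun t => ϕ t x) '' Ioi n)) (hnc : ¬ IsClosed (orbit ϕ x)) :
    ¬ IsClosed (closure (orbit ϕ x) \ orbit ϕ x) := by
  intro hD
  have : LocallyCompactSpace (closure (range fun t => ϕ t x)) := isClosed_closure.locallyCompactSpace
  obtain ⟨n, W, hW, ⟨_, hsW, s, rfl⟩, hWsub⟩ :=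
    exists_isOpen_inter_range_subset_image_Icc (ϕ.continuous_orbit_map x) hD
  obtain ⟨t, ht, htW⟩ := exists_gt_map_mem_of_mem_closure_image_Ioi hx hW hsW (n + 1)
  obtain ⟨u, hu, hut⟩ := hWsub ⟨htW, t, rfl⟩
  exact hnc (ϕ.isClosed_orbit_of_map_eq_map x (by linarith [hu.2]) hut.symm)

theorem orbit_reverse : orbit ϕ.reverse x = orbit ϕ x :=
  neg_surjective.range_comp (fun t => ϕ t x)

theorem mem_closure_reverse_image_Ioi
    (hx : x ∈ ⋂ n : ℝ, closure ((fun t => ϕ t x) '' Iio n)) :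
    x ∈ ⋂ n : ℝ, closure ((fun t => ϕ.reverse t x) '' Ioi n) := by
  refine mem_iInter.2 fun n => closure_mono ?_ (mem_iInter.1 hx (-n))
  rintro _ ⟨t, ht, rfl⟩
  exact ⟨-t, mem_Ioi.2 (by linarith [mem_Iio.1 ht]), by simp⟩

theorem not_isClosed_closure_orbit_diff_orbit [T2Space X] [LocallyCompactSpace X]
    (hx : x ∈ (⋂ n : ℝ, closure ((fun t => ϕ t x) '' Iio n)) ∪
      ⋂ n : ℝ, closure ((fun t => ϕ t x) '' Ioi n))
    (hnc : ¬ IsClosed (orbit ϕ x)) :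
    ¬ IsClosed (closure (orbit ϕ x) \ orbit ϕ x) := by
  rcases hx with hα | hω
  · rw [← orbit_reverse] at hnc ⊢
    exact not_isClosed_closure_orbit_diff_orbit_of_forward (mem_closure_reverse_image_Ioi hα) hnc
  · exact not_isClosed_closure_orbit_diff_orbit_of_forward hω hnc

end Flow

theorem stmt_10 {X : Type*} [TopologicalSpace X] [T2Space X] [LocallyCompactSpace X]
    (v : ℝ → X → X)
    (hc : Continuous fun p : ℝ × X => v p.1 p.2)
    (h0 : ∀ x : X, v 0 x = x)
    (hadd : ∀ s t : ℝ, ∀ x : X, v s (v t x) = v (s + t) x)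
    (x : X)
    (hrec : x ∈ (⋂ n : ℝ, closure ((fun t => v t x) '' Set.Iio n)) ∪
        ⋂ n : ℝ, closure ((fun t => v t x) '' Set.Ioi n))
    (hnc : ¬ IsClosed (Set.range fun t => v t x)) :
    ¬ IsClosed (closure (Set.range fun t => v t x) \ Set.range fun t => v t x) :=
  let ϕ : Flow ℝ X :=
    { toFun := v, cont' := hc, map_add' := fun s t y => (hadd s t y).symm, map_zero' := h0 }
  ϕ.not_isClosed_closure_orbit_diff_orbit hrec hnc
end

section
/- Let F be an invariant decomposition of a topological space X. Then the union Cl(F) of closed elements of F is invariant under the class decomposition: if x ∈ Cl(F) and closure(F(y)) = closure(F(x)), then y ∈ Cl(F). Similarly, if x belongs to a non-closed element L = F(x) whose derived set closure(L) \ L is closed (and nonempty), then the class of x equals L itself, i.e., {y : closure(F(y)) = closure(F(x))} = F(x). -/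
theorem stmt_13 {X : Type*} [TopologicalSpace X] (s : Setoid X)
    (hinv : ∀ U : Set X, IsOpen U → IsOpen {y | ∃ x ∈ U, s x y}) :
    (∀ x y : X, IsClosed {z | s x z} →
        closure {z | s y z} = closure {z | s x z} → IsClosed {z | s y z}) ∧
      ∀ x : X, ¬ IsClosed {z | s x z} →
        IsClosed (closure {z | s x z} \ {z | s x z}) →
        {y : X | closure {z | s y z} = closure {z | s x z}} = {z | s x z} := by
  have hsat : ∀ x y : X, y ∈ closure {z | s x z} → ∀ w, s y w →
      w ∈ closure {z | s x z} := by
    intro x y hy w hw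
    by_contra hwc
    have hUopen : IsOpen (closure {z | s x z})ᶜ := isClosed_closure.isOpen_compl
    have hVopen := hinv _ hUopen
    have hyV : y ∈ {v | ∃ u ∈ (closure {z | s x z})ᶜ, s u v} := ⟨w, hwc, s.symm hw⟩
    obtain ⟨c, hcV, hcC⟩ := mem_closure_iff.mp hy _ hVopen hyV
    obtain ⟨u, huU, huc⟩ := hcV
    exact huU (subset_closure (s.trans hcC (s.symm huc)))
  have hclasseq : ∀ x y : X, s x y → {z | s y z} = {z | s x z} := by
    intro x y hxy
    ext z; exact ⟨fun h => s.trans hxy h, fun h => s.trans (s.symm hxy) h⟩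
  constructor
  · intro x y hx heq
    have hy : y ∈ closure {z | s x z} := by
      rw [← heq]; exact subset_closure (s.refl y)
    rw [hx.closure_eq] at hy
    rw [hclasseq x y hy]; exact hx
  · intro x hnc hD
    ext y
    constructor
    · intro (hy : closure {z | s y z} = closure {z | s x z})
      by_contra hyx
      have hyc : y ∈ closure {z | s x z} := by
        rw [← hy]; exact subset_closure (s.refl y)
      have hFy : {z | s y z} ⊆ closure {z | s x z} \ {z | s x z} := by
        intro w hw
        exact ⟨hsat x y hyc w hw, fun hwx => hyx (s.trans hwx (s.symm hw))⟩
      have hsub : closure {z | s y z} ⊆ closure {z | s x z} \ {z | s x z} :=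
        closure_minimal hFy hD
      have hx' : x ∈ closure {z | s y z} := by
        rw [hy]; exact subset_closure (s.refl x)
      exact (hsub hx').2 (s.refl x)
    · intro hy
      show closure {z | s y z} = closure {z | s x z}
      rw [hclasseq x y hy]
end

section
/- Let X be a topological space. Define: a point x is closed if {x} is closed; proper if closure({x}) \ {x} is closed; recurrent if x is closed or not proper. Then the set of recurrent points together with the union over all x of (closure({x}) \ {x}) ∩ P(τ) is contained in the quasi-recurrent set Q(τ), and X \ Q(τ) ⊆ P(τ) ∩ max(τ), where P(τ) is the set of non-closed proper points and max(τ) is the set of maximal points of the specialization preorder. -/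
open Classical in
/-- The abstract element of a point: the connected component of `x` in the set of points
with the same singleton derived set (when `x` is proper, i.e. `T_D`), or in the set of
points with the same singleton closure (when `x` is non-proper). -/
noncomputable def absElem {X : Type*} [TopologicalSpace X] (x : X) : Set X :=
  if IsClosed (closure ({x} : Set X) \ {x}) then
    connectedComponentIn {x' | closure ({x} : Set X) \ {x} = closure {x'} \ {x'}} x
  else
    connectedComponentIn {x' | closure ({x} : Set X) = closure {x'}} x

/-- `x` is recurrent if it is closed or non-`T_D`. -/
def recurrentPt {X : Type*} [TopologicalSpace X] (x : X) : Prop :=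
  IsClosed ({x} : Set X) ∨ ¬ IsClosed (closure ({x} : Set X) \ {x})

/-- `x` is non-maximal in the specialization preorder. -/
def nonMaxPt {X : Type*} [TopologicalSpace X] (x : X) : Prop :=
  ∃ y : X, closure ({x} : Set X) ⊂ closure {y}

/-- `x` is quasi-recurrent if its abstract element contains a recurrent or non-maximal point. -/
def quasiRecPt {X : Type*} [TopologicalSpace X] (x : X) : Prop :=
  ∃ y ∈ absElem x, recurrentPt y ∨ nonMaxPt y


lemma mem_absElem_self {X : Type*} [TopologicalSpace X] (x : X) : x ∈ absElem x := by
  unfold absElem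
  split <;> exact mem_connectedComponentIn rfl

lemma key_qr {X : Type*} [TopologicalSpace X] (x : X)
    (h : recurrentPt x ∨ nonMaxPt x) : quasiRecPt x :=
  ⟨x, mem_absElem_self x, h⟩

theorem stmt_15 {X : Type*} [TopologicalSpace X] :
    ({x : X | recurrentPt x} ∪
        ⋃ x : X, (closure ({x} : Set X) \ {x}) ∩
          {y : X | ¬ IsClosed ({y} : Set X) ∧ IsClosed (closure ({y} : Set X) \ {y})}) ⊆
        {x : X | quasiRecPt x} ∧
      Set.univ \ {x : X | quasiRecPt x} ⊆
        {y : X | ¬ IsClosed ({y} : Set X) ∧ IsClosed (closure ({y} : Set X) \ {y})} ∩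
          {y : X | ¬ nonMaxPt y} := by
  constructor
  · rintro y (hy | hy)
    · exact key_qr y (Or.inl hy)
    · simp only [Set.mem_iUnion] at hy
      obtain ⟨x, ⟨hyc, hyx⟩, hnc, hp⟩ := hy
      apply key_qr y (Or.inr ⟨x, ?_, ?_⟩)
      · exact closure_minimal (Set.singleton_subset_iff.2 hyc) isClosed_closure
      · intro hsub
        have hxy : x ∈ closure ({y} : Set X) \ {y} :=
          ⟨hsub (subset_closure rfl), fun h => hyx (by simp_all)⟩
        have h2 : closure ({x} : Set X) ⊆ closure ({y} : Set X) \ {y} :=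
          closure_minimal (Set.singleton_subset_iff.2 hxy) hp
        exact (h2 hyc).2 rfl
  · rintro x ⟨-, hx⟩
    simp only [Set.mem_setOf_eq] at hx
    constructor
    · constructor
      · intro h; exact hx (key_qr x (Or.inl (Or.inl h)))
      · by_contra h; exact hx (key_qr x (Or.inl (Or.inr h)))
    · intro h; exact hx (key_qr x (Or.inr h))
end

section
/- Let (P, ≤) be the poset ℤ × {0,1} with (n,0) < (m,1) iff n = m, and let τ = {∅} ∪ {P \ F : F a finite downset} (where a downset F satisfies: a ∈ F and b ≤ a imply b ∈ F). Then τ is a topology on P whose specialization preorder is ≤, the set of closed points of (P,τ) is ℤ × {0}, every point of ℤ × {1} is a non-closed T_D point, and the set ℤ × {0} of closed (hence recurrent) points is not closed in (P, τ). -/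
/-! Every principal downset `↓b` is finite, hence closed, and it is the smallest closed set
containing `b`; so the closure of a point is its principal downset. A point is therefore closed
exactly when it is minimal, and `closure {(n,1)} \ {(n,1)}` is the closed point `(n,0)`.
Finally `ℤ × {0}` is infinite and proper, hence not closed. -/

open Set Topology

/-- The order on `P = ℤ × Bool`: `(n,0) < (m,1)` iff `n = m` (with `false` playing the
role of `0` and `true` the role of `1`). -/
def ple (a b : ℤ × Bool) : Prop :=
  a = b ∨ (a.1 = b.1 ∧ a.2 = false ∧ b.2 = true)

namespace FiniteDownset

variable {α : Type*} (r : α → α → Prop)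

def IsDownClosed (S : Set α) : Prop :=
  ∀ a ∈ S, ∀ b, r b a → b ∈ S

def closedSets : Set (Set α) :=
  {S | S = univ ∨ S.Finite ∧ IsDownClosed r S}

lemma sInter_mem_closedSets (A : Set (Set α)) (hA : A ⊆ closedSets r) :
    ⋂₀ A ∈ closedSets r := by
  by_cases hfin : ∃ S ∈ A, S.Finite ∧ IsDownClosed r S
  · obtain ⟨S, hSA, hSfin, -⟩ := hfin
    refine Or.inr ⟨hSfin.subset (sInter_subset_of_mem hSA), ?_⟩
    intro a ha b hba S' hS'
    rcases hA hS' with rfl | ⟨-, hdown⟩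
    · trivial
    · exact hdown a (ha S' hS') b hba
  · refine Or.inl (sInter_eq_univ.2 fun S hS => ?_)
    exact (hA hS).resolve_right fun h => hfin ⟨S, hS, h⟩

lemma union_mem_closedSets (A : Set α) (hA : A ∈ closedSets r) (B : Set α)
    (hB : B ∈ closedSets r) : A ∪ B ∈ closedSets r := by
  rcases hA with rfl | ⟨hAfin, hAdown⟩
  · exact Or.inl (univ_union B)
  rcases hB with rfl | ⟨hBfin, hBdown⟩
  · exact Or.inl (union_univ A)
  refine Or.inr ⟨hAfin.union hBfin, ?_⟩
  rintro a (ha | ha) b hba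
  · exact Or.inl (hAdown a ha b hba)
  · exact Or.inr (hBdown a ha b hba)

abbrev topology : TopologicalSpace α :=
  .ofClosed (closedSets r) (Or.inr ⟨finite_empty, fun _ h => h.elim⟩)
    (sInter_mem_closedSets r) (union_mem_closedSets r)

variable {r}

lemma isClosed_iff {S : Set α} :
    IsClosed[topology r] S ↔ S = univ ∨ S.Finite ∧ IsDownClosed r S := by
  rw [← @isOpen_compl_iff _ _ (topology r)]
  show Sᶜᶜ ∈ closedSets r ↔ _
  rw [compl_compl]
  rfl

lemma isOpen_iff {U : Set α} :
    IsOpen[topology r] U ↔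
      U = ∅ ∨ ∃ F : Set α, F.Finite ∧ IsDownClosed r F ∧ U = Fᶜ := by
  show Uᶜ = univ ∨ _ ↔ _
  rw [compl_univ_iff]
  refine or_congr_right ⟨fun h => ⟨Uᶜ, h.1, h.2, (compl_compl U).symm⟩, ?_⟩
  rintro ⟨F, hF, hdown, hU⟩
  rw [hU, compl_compl]
  exact ⟨hF, hdown⟩

lemma not_isClosed_of_infinite {S : Set α} (hS : S.Infinite) (hne : S ≠ univ) :
    ¬ IsClosed[topology r] S := by
  rw [isClosed_iff]
  rintro (h | ⟨hfin, -⟩)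
  exacts [hne h, hS hfin]

variable [Std.Refl r] [IsTrans α r]

lemma closure_singleton (hfin : ∀ b, {a | r a b}.Finite) (b : α) :
    closure[topology r] {b} = {a | r a b} := by
  refine Subset.antisymm ?_ fun a hab => ?_
  · refine @closure_minimal _ (topology r) _ _ (singleton_subset_iff.2 (refl_of r b)) ?_
    exact isClosed_iff.2 <| Or.inr ⟨hfin b, fun a hab c hca => _root_.trans_of r hca hab⟩
  · rcases isClosed_iff.1 (@isClosed_closure _ (topology r) {b}) with h | ⟨-, hdown⟩
    · exact h ▸ mem_univ a
    · exact hdown b (@subset_closure _ (topology r) {b} b rfl) a hab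

lemma isClosed_singleton_iff (hfin : ∀ b, {a | r a b}.Finite) (b : α) :
    IsClosed[topology r] {b} ↔ ∀ a, r a b → a = b := by
  rw [← @closure_eq_iff_isClosed _ (topology r), closure_singleton hfin,
    eq_singleton_iff_unique_mem]
  exact and_iff_right (refl_of r b)

end FiniteDownset

lemma ple_false_iff {a : ℤ × Bool} {n : ℤ} : ple a (n, false) ↔ a = (n, false) := by
  simp [ple]

lemma ple_true_iff {a : ℤ × Bool} {n : ℤ} :
    ple a (n, true) ↔ a = (n, true) ∨ a = (n, false) := by
  obtain ⟨m, _ | _⟩ := a <;> simp [ple, eq_comm]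

instance : Std.Refl ple := ⟨fun _ => Or.inl rfl⟩

instance : IsTrans (ℤ × Bool) ple where
  trans a b c hab hbc := by
    obtain ⟨n, _ | _⟩ := c
    · rw [ple_false_iff] at hbc ⊢
      exact ple_false_iff.1 (hbc ▸ hab)
    · rcases ple_true_iff.1 hbc with rfl | rfl
      · exact hab
      · exact ple_true_iff.2 (Or.inr (ple_false_iff.1 hab))

lemma finite_setOf_ple (b : ℤ × Bool) : {a | ple a b}.Finite := by
  obtain ⟨n, _ | _⟩ := b
  · simp [ple_false_iff]
  · simp only [ple_true_iff, ofPred_or, ofPred_eq_eq_singleton]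
    exact (finite_singleton _).union (finite_singleton _)

open FiniteDownset in
theorem stmt_19 :
    ∃ t : TopologicalSpace (ℤ × Bool),
      (∀ U : Set (ℤ × Bool), t.IsOpen U ↔
        (U = ∅ ∨ ∃ F : Set (ℤ × Bool), F.Finite ∧
          (∀ a ∈ F, ∀ b : ℤ × Bool, ple b a → b ∈ F) ∧ U = Fᶜ)) ∧
      (∀ a b : ℤ × Bool, a ∈ @closure _ t {b} ↔ ple a b) ∧
      (∀ n : ℤ, @IsClosed _ t {((n, false) : ℤ × Bool)}) ∧
      (∀ n : ℤ, ¬ @IsClosed _ t {((n, true) : ℤ × Bool)} ∧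
        @IsClosed _ t (@closure _ t {((n, true) : ℤ × Bool)} \ {(n, true)})) ∧
      ¬ @IsClosed _ t {p : ℤ × Bool | p.2 = false} := by
  have hclosure := closure_singleton finite_setOf_ple
  have hclosed (n : ℤ) : IsClosed[topology ple] {((n, false) : ℤ × Bool)} :=
    (isClosed_singleton_iff finite_setOf_ple _).2 fun _ => ple_false_iff.1
  refine ⟨topology ple, fun U => isOpen_iff, fun a b => by rw [hclosure]; rfl, hclosed,
    fun n => ⟨?_, ?_⟩, ?_⟩
  · rw [isClosed_singleton_iff finite_setOf_ple, not_forall]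
    exact ⟨(n, false), fun h => by simpa using h (ple_true_iff.2 (Or.inr rfl))⟩
  · convert hclosed n using 1
    ext a
    simp only [hclosure, mem_sdiff, mem_ofPred_eq, ple_true_iff, mem_singleton_iff]
    grind
  · refine not_isClosed_of_infinite ?_ fun h => ?_
    · exact infinite_of_injective_forall_mem (Prod.mk_left_injective false) fun _ => rfl
    · simpa using eq_univ_iff_forall.1 h ((0 : ℤ), true)
end
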